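/- A cyclic Q-module with generator v is projective if and only if there exists u ∈ Q with u² = u such that the module is isomorphic to Q·u (equivalently, γ_v = γ_u where γ_v(q) = (q ⋆ v) /⋆ v and γ_u(q) = qu/u). -/

import Mathlib

universe u v w

/-- A (unital) quantale: a sup-lattice with a monoid multiplication distributing
over arbitrary joins on both sides. -/
class UQuantale (Q : Type u) extends CompleteLattice Q, Monoid Q where
  mul_sSup : ∀ (a : Q) (s : Set Q), a * SupSet.sSup s = ⨆ b ∈ s, a * b
  sSup_mul : ∀ (s : Set Q) (a : Q), SupSet.sSup s * a = ⨆ b ∈ s, b * a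

/-- A left module over a quantale `Q`: a sup-lattice with an action of `Q`
distributing over arbitrary joins in both arguments and compatible with the
monoid structure of `Q`. -/
class QModule (Q : Type u) [UQuantale Q] (M : Type v) [CompleteLattice M] extends SMul Q M where
  mul_smul' : ∀ (a b : Q) (m : M), (a * b) • m = a • b • m
  smul_sSup : ∀ (a : Q) (s : Set M), a • sSup s = ⨆ m ∈ s, a • m
  sSup_smul : ∀ (s : Set Q) (m : M), (sSup s : Q) • m = ⨆ a ∈ s, a • m
  one_smul' : ∀ m : M, (1 : Q) • m = m

/-- The residual `q \⋆ m = ⋁ {n | q ⋆ n ≤ m}`. -/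
def lres {Q : Type u} [UQuantale Q] {M : Type v} [CompleteLattice M] [QModule Q M]
    (q : Q) (m : M) : M :=
  sSup {n : M | q • n ≤ m}

/-- The residual `m /⋆ n = ⋁ {q | q ⋆ n ≤ m}`. -/
def rres {Q : Type u} [UQuantale Q] {M : Type v} [CompleteLattice M] [QModule Q M]
    (m n : M) : Q :=
  sSup {q : Q | q • n ≤ m}

/-- The left residual `q \ r = ⋁ {s | q · s ≤ r}` of the quantale multiplication. -/
def qlres {Q : Type u} [UQuantale Q] (q r : Q) : Q :=
  sSup {s : Q | q * s ≤ r}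

/-- A homomorphism of `Q`-modules: a map preserving arbitrary joins and the scalar action. -/
def IsQModHom (Q : Type u) [UQuantale Q] {A : Type v} {B : Type w}
    [CompleteLattice A] [CompleteLattice B] [QModule Q A] [QModule Q B] (f : A → B) : Prop :=
  (∀ S : Set A, f (sSup S) = ⨆ x ∈ S, f x) ∧ ∀ (q : Q) (x : A), f (q • x) = q • f x

/-!
A cyclic module `M = Q·v` is the image of the surjection `q ↦ q • v : Q → M`, and `Q` is
projective over itself, so `M` is projective iff this surjection splits. A splitting `h` is
determined by the idempotent `u = h v`, through `h (q • v) = q·u`; such a map is well defined and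
order-reflecting exactly when `r • v ≤ q • v ↔ r·u ≤ q·u`, which is the residual condition
`γ_v = γ_u`.
-/

instance UQuantale.toQModule (Q : Type u) [UQuantale Q] : QModule Q Q where
  toSMul := instSMulOfMul
  mul_smul' := mul_assoc
  smul_sSup := UQuantale.mul_sSup
  sSup_smul := UQuantale.sSup_mul
  one_smul' := one_mul

def QModule.Projective (Q : Type u) [UQuantale Q] (P : Type v) [CompleteLattice P]
    [QModule Q P] : Prop :=
  ∀ (A B : Type w) [CompleteLattice A] [CompleteLattice B] [QModule Q A] [QModule Q B],
    ∀ (e : A → B) (f : P → B), IsQModHom Q e → Function.Surjective e → IsQModHom Q f →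
      ∃ h : P → A, IsQModHom Q h ∧ e ∘ h = f

section

variable {Q : Type u} [UQuantale Q]

namespace IsQModHom

variable {A : Type v} {B : Type w} {C : Type*} [CompleteLattice A] [CompleteLattice B]
  [CompleteLattice C] [QModule Q A] [QModule Q B] [QModule Q C]

theorem id : IsQModHom Q (id : A → A) :=
  ⟨fun _ => sSup_eq_iSup, fun _ _ => rfl⟩

theorem comp {g : B → C} {f : A → B} (hg : IsQModHom Q g) (hf : IsQModHom Q f) :
    IsQModHom Q (g ∘ f) := by
  refine ⟨fun S => ?_, fun q x => ?_⟩
  · simp only [Function.comp_apply]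
    rw [hf.1, ← sSup_image, hg.1, iSup_image]
  · simp only [Function.comp_apply, hf.2, hg.2]

theorem monotone {f : A → B} (hf : IsQModHom Q f) : Monotone f := by
  intro a b hab
  have hsup := hf.1 {a, b}
  rw [sSup_pair, sup_eq_right.mpr hab] at hsup
  rw [hsup]
  exact le_iSup₂_of_le a (Set.mem_insert a {b}) le_rfl

theorem of_comp_of_surjective {g : B → C} {p : A → B} (hp : IsQModHom Q p)
    (hsurj : Function.Surjective p) (hgp : IsQModHom Q (g ∘ p)) : IsQModHom Q g := by
  refine ⟨fun S => ?_, fun q y => ?_⟩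
  · have hS : p '' (Function.surjInv hsurj '' S) = S := by
      rw [Set.image_image]
      simp only [Function.surjInv_eq hsurj, Set.image_id']
    calc g (sSup S) = (g ∘ p) (sSup (Function.surjInv hsurj '' S)) := by
          rw [Function.comp_apply, hp.1, ← sSup_image, hS]
      _ = ⨆ x ∈ S, g x := by
          rw [hgp.1, iSup_image]
          simp only [Function.comp_apply, Function.surjInv_eq hsurj]
  · obtain ⟨x, rfl⟩ := hsurj y
    rw [← hp.2, ← Function.comp_apply (f := g), hgp.2, Function.comp_apply]

end IsQModHom

variable {M : Type v} [CompleteLattice M] [QModule Q M]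

theorem isQModHom_smul_right (m : M) : IsQModHom Q fun q : Q => q • m :=
  ⟨fun S => QModule.sSup_smul S m, fun q x => QModule.mul_smul' q x m⟩

theorem surjective_smul_right {v : M} (hv : ∀ m : M, ∃ q : Q, m = q • v) :
    Function.Surjective fun q : Q => q • v :=
  fun m => (hv m).imp fun _ hq => hq.symm

theorem rres_smul_le (m n : M) : (rres m n : Q) • n ≤ m := by
  rw [rres, QModule.sSup_smul]
  exact iSup₂_le fun _ h => h

theorem smul_le_iff_le_rres {q : Q} {m n : M} : q • n ≤ m ↔ q ≤ rres m n :=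
  ⟨fun h => le_sSup h, fun h => ((isQModHom_smul_right n).monotone h).trans (rres_smul_le m n)⟩

theorem gc_smul_rres (n : M) : GaloisConnection (fun q : Q => q • n) (fun m => (rres m n : Q)) :=
  fun _ _ => smul_le_iff_le_rres

theorem rres_smul_smul (q : Q) (n : M) : (rres (q • n) n : Q) • n = q • n :=
  (gc_smul_rres n).l_u_l_eq_l q

/-- `γ_v = γ_w` says exactly that `v` and `w` generate isomorphic cyclic modules. -/
theorem forall_rres_smul_eq_iff {N : Type w} [CompleteLattice N] [QModule Q N] {v : M} {w : N} :
    (∀ q : Q, (rres (q • v) v : Q) = rres (q • w) w) ↔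
      ∀ q r : Q, r • v ≤ q • v ↔ r • w ≤ q • w := by
  refine ⟨fun h q r => ?_, fun h q => eq_of_forall_le_iff fun r => ?_⟩
  · rw [smul_le_iff_le_rres, smul_le_iff_le_rres, h]
  · rw [← smul_le_iff_le_rres, ← smul_le_iff_le_rres, h]

end

namespace QModule.Projective

variable {Q : Type u} [UQuantale Q]

theorem self : QModule.Projective.{u, u, w} Q Q := by
  intro A B _ _ _ _ e f he hsurj hf
  obtain ⟨a, ha⟩ := hsurj (f 1)
  refine ⟨fun q => q • a, isQModHom_smul_right a, funext fun q => ?_⟩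
  rw [Function.comp_apply, he.2, ha, ← hf.2, smul_eq_mul, mul_one]

theorem of_retract {M : Type v} {P : Type*} [CompleteLattice M] [CompleteLattice P]
    [QModule Q M] [QModule Q P] (s : M → P) (r : P → M) (hs : IsQModHom Q s)
    (hr : IsQModHom Q r) (hrs : r ∘ s = id) (hP : QModule.Projective.{_, _, w} Q P) :
    QModule.Projective.{u, v, w} Q M := by
  intro A B _ _ _ _ e f he hsurj hf
  obtain ⟨h, hh, heh⟩ := hP A B e (f ∘ r) he hsurj (hf.comp hr)
  refine ⟨h ∘ s, hh.comp hs, ?_⟩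
  rw [← Function.comp_assoc, heh, Function.comp_assoc, hrs, Function.comp_id]

variable {M : Type u} [CompleteLattice M] [QModule Q M] {v : M}

theorem exists_idempotent_rres_eq (hv : ∀ m : M, ∃ q : Q, m = q • v)
    (hM : QModule.Projective.{u, u, u} Q M) :
    ∃ u : Q, u • u = u ∧ ∀ q : Q, (rres (q • v) v : Q) = rres (q • u) u := by
  obtain ⟨h, hh, hid⟩ :=
    hM Q M _ id (isQModHom_smul_right v) (surjective_smul_right hv) IsQModHom.id
  have huv : h v • v = v := congrFun hid v
  have hq : ∀ q : Q, h (q • v) = q • h v := fun q => hh.2 q v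
  refine ⟨h v, by rw [← hq, huv],
    forall_rres_smul_eq_iff.mpr fun q r => ⟨fun hrq => ?_, fun hrq => ?_⟩⟩
  · simpa only [hq] using hh.monotone hrq
  · simpa only [smul_eq_mul, QModule.mul_smul', huv] using
      (isQModHom_smul_right v).monotone hrq

theorem of_idempotent_rres_eq (hv : ∀ m : M, ∃ q : Q, m = q • v) {u : Q} (hu : u • u = u)
    (hγ : ∀ q : Q, (rres (q • v) v : Q) = rres (q • u) u) :
    QModule.Projective.{u, u, w} Q M := by
  have hle := forall_rres_smul_eq_iff.mp hγ
  have huv : u • v = v := le_antisymm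
    (by simpa only [QModule.one_smul'] using (hle 1 u).mpr (by rw [hu, QModule.one_smul']))
    (by simpa only [QModule.one_smul'] using (hle u 1).mpr (by rw [hu, QModule.one_smul']))
  set σ : M → Q := fun m => (rres m v : Q) • u
  have hσv : σ ∘ (fun q : Q => q • v) = fun q => q • u :=
    funext fun q => by simp only [σ, Function.comp_apply, hγ q, rres_smul_smul]
  have hσ : IsQModHom Q σ := IsQModHom.of_comp_of_surjective (isQModHom_smul_right v)
    (surjective_smul_right hv) (hσv ▸ isQModHom_smul_right u)
  refine of_retract σ (fun q : Q => q • v) hσ (isQModHom_smul_right v) (funext fun m => ?_) self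
  obtain ⟨q, rfl⟩ := hv m
  simp only [σ, Function.comp_apply, id, smul_eq_mul, QModule.mul_smul', huv, rres_smul_smul]

end QModule.Projective

/-- A cyclic `Q`-module with generator `v` is projective iff there is an idempotent
`u ∈ Q` with `M ≅ Q·u`, equivalently `γ_v = γ_u`, where `γ_v q = (q ⋆ v) /⋆ v` and
`γ_u q = q·u / u`. -/
theorem stmt_18 {Q : Type u} [UQuantale Q] (M : Type u) [CompleteLattice M] [QModule Q M]
    (v : M) (hv : ∀ m : M, ∃ q : Q, m = q • v) :
    (∀ (A B : Type u) [CompleteLattice A] [CompleteLattice B] [QModule Q A] [QModule Q B],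
        ∀ (e : A → B) (f : M → B), IsQModHom Q e → Function.Surjective e → IsQModHom Q f →
          ∃ h : M → A, IsQModHom Q h ∧ e ∘ h = f) ↔
      ∃ u : Q, u * u = u ∧
        ∀ q : Q, sSup {r : Q | r • v ≤ q • v} = sSup {r : Q | r * u ≤ q * u} :=
  ⟨QModule.Projective.exists_idempotent_rres_eq hv,
    fun ⟨_, hu, hγ⟩ => QModule.Projective.of_idempotent_rres_eq hv hu hγ⟩
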